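/- Let G be a finite simple graph, let M be a maximum matching of G with |M| = m, let t be the number of isolated vertices of G, and let k be the number of bad vertices of G with respect to M. Then every total cover (S_V, S_E) of G satisfies |S_V| + |S_E| ≥ (m + k)/2 + t. -/

import Mathlib

open SimpleGraph

/-- A total cover of a simple graph `G`: a pair of a vertex set `SV` and an edge set
`SE ⊆ E(G)` such that every vertex not in `SV` is adjacent to a vertex of `SV` or is an
endpoint of an edge of `SE`, and every edge not in `SE` has an endpoint in `SV` or shares
an endpoint with an edge of `SE`. -/
def IsTotalCover {V : Type*} (G : SimpleGraph V) (SV : Set V) (SE : Set (Sym2 V)) : Prop :=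
  SE ⊆ G.edgeSet ∧
  (∀ v : V, v ∉ SV → (∃ u ∈ SV, G.Adj v u) ∨ (∃ e ∈ SE, v ∈ e)) ∧
  (∀ e ∈ G.edgeSet, e ∉ SE → (∃ v ∈ SV, v ∈ e) ∨ (∃ f ∈ SE, ∃ v : V, v ∈ e ∧ v ∈ f))

/-- A matching of `G`: a set of edges of `G` that are pairwise vertex-disjoint. -/
def IsMatchingSet {V : Type*} (G : SimpleGraph V) (M : Set (Sym2 V)) : Prop :=
  M ⊆ G.edgeSet ∧ ∀ e ∈ M, ∀ f ∈ M, e ≠ f → ∀ v : V, v ∈ e → v ∉ f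

/-- A maximum matching of `G`: a matching of largest cardinality. -/
def IsMaximumMatching {V : Type*} (G : SimpleGraph V) (M : Set (Sym2 V)) : Prop :=
  IsMatchingSet G M ∧ ∀ M' : Set (Sym2 V), IsMatchingSet G M' → M'.ncard ≤ M.ncard

/-- A vertex is covered by a matching `M` if it is an endpoint of some edge of `M`. -/
def CoveredBy {V : Type*} (M : Set (Sym2 V)) (v : V) : Prop :=
  ∃ e ∈ M, v ∈ e

/-- A bad vertex with respect to a matching `M`: a vertex not covered by `M` which is
adjacent to both endpoints of some edge of `M`. -/
def IsBad {V : Type*} (G : SimpleGraph V) (M : Set (Sym2 V)) (w : V) : Prop :=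
  ¬ CoveredBy M w ∧ ∃ u v : V, s(u, v) ∈ M ∧ G.Adj w u ∧ G.Adj w v

/-- An isolated vertex: a vertex of degree 0, i.e. adjacent to no vertex. -/
def IsIsolated {V : Type*} (G : SimpleGraph V) (v : V) : Prop :=
  ∀ u : V, ¬ G.Adj v u

/-- The total graph `T(G)` of `G`: its vertices are the vertices and edges of `G`, with
adjacency given by adjacency/incidence in `G`. -/
def totalGraph {V : Type*} (G : SimpleGraph V) : SimpleGraph (V ⊕ G.edgeSet) where
  Adj x y :=
    match x, y with
    | .inl a, .inl b => G.Adj a b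
    | .inl a, .inr e => a ∈ e.1
    | .inr e, .inl a => a ∈ e.1
    | .inr e, .inr f => e ≠ f ∧ ∃ v : V, v ∈ e.1 ∧ v ∈ f.1
  symm := by
    constructor
    rintro (a | e) (b | f) h
    · exact G.symm.symm _ _ h
    · exact h
    · exact h
    · exact ⟨h.1.symm, by obtain ⟨v, h1, h2⟩ := h.2; exact ⟨v, h2, h1⟩⟩
  loopless := by
    constructor
    rintro (a | e) h
    · exact G.loopless.irrefl a h
    · exact h.1 rfl

/-!
For every edge `e` of the maximum matching `M` form the cluster of `e`: its two endpoints
together with the bad vertices assigned to `e`. An alternating path `w u v w'` shows that two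
distinct bad vertices cannot both be attached to `uv ∈ M`, so clusters are pairwise disjoint and
`k` of them contain a bad vertex. Each cluster meets a non-isolated element of the cover, since
`e` must be dominated. A cluster with a bad vertex spans a triangle, and the three sides of a
triangle cannot all be dominated by one vertex; so it meets two cover elements, or a single edge
lying inside the cluster. A vertex meets at most one cluster and an edge at most two; letting
each cover element split two units among the clusters it meets, every cluster receives at least
one unit and every cluster with a bad vertex at least two, whence
`m + k ≤ 2 (|S_V| - t + |S_E|)`, the isolated vertices all lying in `S_V`.
-/

open Finset in
theorem card_add_card_le_two_mul_card {α β : Type*} (I K : Finset α) (T : Finset β)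
    (r : α → β → Prop) [DecidableRel r] (hKI : K ⊆ I)
    (hcover : ∀ i ∈ I, ∃ d ∈ T, r i d)
    (htwo : ∀ d ∈ T, #{i ∈ I | r i d} ≤ 2)
    (hsole : ∀ i ∈ K, ∀ d ∈ T, r i d → (∀ d' ∈ T, r i d' → d' = d) → ∀ j ∈ I, r j d → j = i) :
    #I + #K ≤ 2 * #T := by
  classical
  -- every `d ∈ T` hands out two units, split equally among the `i ∈ I` related to it
  set share : β → ℕ := fun d => 2 / #{i ∈ I | r i d}
  have hshare_pos : ∀ i ∈ I, ∀ d ∈ T, r i d → 1 ≤ share d := fun i hi d hd hid =>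
    (Nat.le_div_iff_mul_le (card_pos.2 ⟨i, mem_filter.2 ⟨hi, hid⟩⟩)).2 (by simpa using htwo d hd)
  have hreceive : ∀ i ∈ I, (if i ∈ K then 2 else 1) ≤ ∑ d ∈ T with r i d, share d := by
    intro i hi
    have hcard : #{d ∈ T | r i d} ≤ ∑ d ∈ T with r i d, share d := by
      simpa using card_nsmul_le_sum _ share 1 fun d hd =>
        hshare_pos i hi d (mem_filter.1 hd).1 (mem_filter.1 hd).2
    obtain ⟨d, hdT, hid⟩ := hcover i hi
    have hd : d ∈ {d ∈ T | r i d} := mem_filter.2 ⟨hdT, hid⟩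
    split_ifs with hiK
    · by_cases hmore : ∃ d' ∈ T, r i d' ∧ d' ≠ d
      · obtain ⟨d', hd'T, hid', hne⟩ := hmore
        exact (one_lt_card.2 ⟨d', mem_filter.2 ⟨hd'T, hid'⟩, d, hd, hne⟩).trans_le hcard
      · push Not at hmore
        have honly : {j ∈ I | r j d} = {i} := eq_singleton_iff_unique_mem.2
          ⟨mem_filter.2 ⟨hi, hid⟩, fun j hj =>
            hsole i hiK d hdT hid hmore j (mem_filter.1 hj).1 (mem_filter.1 hj).2⟩
        calc 2 = share d := by simp [share, honly]
          _ ≤ _ := single_le_sum (fun _ _ => Nat.zero_le _) hd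
    · exact (card_pos.2 ⟨d, hd⟩).trans_le hcard
  calc #I + #K = ∑ i ∈ I, if i ∈ K then 2 else 1 := by
        have hsplit := card_filter_add_card_filter_not (s := I) (· ∈ K)
        rw [filter_mem_eq_inter, inter_eq_right.2 hKI] at hsplit
        rw [sum_ite, sum_const, sum_const, filter_mem_eq_inter, inter_eq_right.2 hKI]
        simp only [smul_eq_mul]
        omega
    _ ≤ ∑ i ∈ I, ∑ d ∈ T with r i d, share d := sum_le_sum hreceive
    _ = ∑ d ∈ T, #{i ∈ I | r i d} * share d := by
        simp only [sum_filter]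
        rw [sum_comm]
        simp [sum_ite]
    _ ≤ ∑ d ∈ T, 2 := sum_le_sum fun d _ => Nat.mul_div_le 2 _
    _ = 2 * #T := by rw [sum_const, smul_eq_mul, mul_comm]

lemma Set.ncard_image_inl_union_image_inr {α β : Type*} [Finite α] [Finite β]
    (A : Set α) (B : Set β) :
    (Sum.inl '' A ∪ Sum.inr '' B : Set (α ⊕ β)).ncard = A.ncard + B.ncard := by
  rw [Set.ncard_union_eq, Set.ncard_image_of_injective _ Sum.inl_injective,
    Set.ncard_image_of_injective _ Sum.inr_injective]
  exact Set.disjoint_left.2 (by rintro _ ⟨a, -, rfl⟩ ⟨b, -, h⟩; cases h)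

lemma Sym2.mem_triangle_of_meets_sides {α : Type*} {a b c : α} {f : Sym2 α}
    (hab : a ≠ b) (hbc : b ≠ c) (hac : a ≠ c)
    (h₁ : ∃ x ∈ f, x = a ∨ x = b) (h₂ : ∃ x ∈ f, x = b ∨ x = c) (h₃ : ∃ x ∈ f, x = a ∨ x = c) :
    ∀ x ∈ f, x = a ∨ x = b ∨ x = c := by
  induction f using Sym2.ind with
  | _ y z =>
    simp only [Sym2.mem_iff, exists_eq_or_imp, exists_eq_left, forall_eq_or_imp, forall_eq] at *
    grind

section

variable {V : Type*}

def coverElems (SV : Set V) (SE : Set (Sym2 V)) : Set (V ⊕ Sym2 V) :=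
  Sum.inl '' SV ∪ Sum.inr '' SE

@[simp] lemma inl_mem_coverElems {SV : Set V} {SE : Set (Sym2 V)} {x : V} :
    Sum.inl x ∈ coverElems SV SE ↔ x ∈ SV := by
  simp [coverElems]

@[simp] lemma inr_mem_coverElems {SV : Set V} {SE : Set (Sym2 V)} {f : Sym2 V} :
    Sum.inr f ∈ coverElems SV SE ↔ f ∈ SE := by
  simp [coverElems]

def Touches (C : Set V) : V ⊕ Sym2 V → Prop
  | .inl x => x ∈ C
  | .inr f => ∃ x ∈ f, x ∈ C

lemma Touches.mono {C D : Set V} (h : C ⊆ D) : ∀ {d}, Touches C d → Touches D d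
  | .inl _, hx => h hx
  | .inr _, ⟨x, hxf, hx⟩ => ⟨x, hxf, h hx⟩

/-- A vertex touches at most one of the disjoint cores and an edge at most two. -/
theorem ncard_add_ncard_le_of_cores {ι : Type*} [Finite V] [Finite ι] (C : ι → Set V)
    (I K : Set ι) (SV : Set V) (SE : Set (Sym2 V)) (hKI : K ⊆ I)
    (hdisj : ∀ i ∈ I, ∀ j ∈ I, ∀ x ∈ C i, x ∈ C j → i = j)
    (hcover : ∀ i ∈ I, ∃ d ∈ coverElems SV SE, Touches (C i) d)
    (hsole : ∀ i ∈ K, ∀ f, (∀ d ∈ coverElems SV SE, Touches (C i) d → d = .inr f) →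
      ∀ x ∈ f, x ∈ C i) :
    I.ncard + K.ncard ≤ 2 * (SV.ncard + SE.ncard) := by
  classical
  have hone : ∀ x, (I.toFinite.toFinset.filter (x ∈ C ·)).card ≤ 1 := fun x =>
    Finset.card_le_one.2 fun i hi j hj => by
      simp only [Finset.mem_filter, Set.Finite.mem_toFinset] at hi hj
      exact hdisj i hi.1 j hj.1 x hi.2 hj.2
  have key := card_add_card_le_two_mul_card I.toFinite.toFinset K.toFinite.toFinset
    (coverElems SV SE).toFinite.toFinset (fun i d => Touches (C i) d)
    (Set.Finite.toFinset_subset_toFinset.2 hKI) (by simpa using hcover) ?_ ?_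
  · rwa [← Set.ncard_eq_toFinset_card, ← Set.ncard_eq_toFinset_card, ← Set.ncard_eq_toFinset_card,
      coverElems, Set.ncard_image_inl_union_image_inr] at key
  · rintro (x | f) -
    · exact (hone x).trans one_le_two
    · induction f using Sym2.ind with
      | _ a b =>
        simp only [Touches, Sym2.mem_iff, exists_eq_or_imp, exists_eq_left, Finset.filter_or]
        exact (Finset.card_union_le _ _).trans (add_le_add (hone a) (hone b))
  · intro i hi d hd hid honly j hj hjd
    simp only [Set.Finite.mem_toFinset] at hi hd hj honly
    rcases d with x | f
    · exact hdisj j hj i (hKI hi) x hjd hid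
    · obtain ⟨x, hxf, hxj⟩ := hjd
      exact hdisj j hj i (hKI hi) x hxj (hsole i hi f honly x hxf)

variable {G : SimpleGraph V} {M : Set (Sym2 V)} {SV : Set V} {SE : Set (Sym2 V)}

namespace IsTotalCover

lemma mem_of_isIsolated (hS : IsTotalCover G SV SE) {v : V} (hv : _root_.IsIsolated G v) :
    v ∈ SV := by
  by_contra hvS
  rcases hS.2.1 v hvS with ⟨u, -, hvu⟩ | ⟨e, he, hve⟩
  · exact hv u hvu
  · obtain ⟨u, rfl⟩ := Sym2.mem_iff_exists.1 hve
    exact hv u (hS.1 he)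

lemma exists_touches_of_mem_edgeSet (hS : IsTotalCover G SV SE) {e : Sym2 V}
    (he : e ∈ G.edgeSet) :
    ∃ d ∈ coverElems (SV \ {v | _root_.IsIsolated G v}) SE, Touches (e : Set V) d := by
  by_cases heS : e ∈ SE
  · exact ⟨.inr e, by simpa using heS, e.out.1, e.out_fst_mem, e.out_fst_mem⟩
  rcases hS.2.2 e he heS with ⟨v, hv, hve⟩ | ⟨f, hf, v, hve, hvf⟩
  · obtain ⟨u, rfl⟩ := Sym2.mem_iff_exists.1 hve
    exact ⟨.inl v, by simpa using ⟨hv, fun hiso => hiso u he⟩, hve⟩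
  · exact ⟨.inr f, by simpa using hf, v, hvf, hve⟩

/-- The three sides of a triangle inside `C` must all be dominated, so an edge that is the only
element of the cover touching `C` meets all three sides. -/
lemma mem_triangle_of_touches_eq (hS : IsTotalCover G SV SE) {C : Set V} {a b c : V}
    (hab : G.Adj a b) (hbc : G.Adj b c) (hac : G.Adj a c) (hC : {a, b, c} ⊆ C) {f : Sym2 V}
    (honly : ∀ d ∈ coverElems (SV \ {v | _root_.IsIsolated G v}) SE, Touches C d → d = .inr f) :
    ∀ x ∈ f, x = a ∨ x = b ∨ x = c := by
  have hmeets : ∀ {p q}, G.Adj p q → p ∈ C → q ∈ C → ∃ x ∈ f, x = p ∨ x = q := by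
    intro p q hpq hp hq
    obtain ⟨d, hd, hdpq⟩ := hS.exists_touches_of_mem_edgeSet (G.mem_edgeSet.2 hpq)
    have hsub : (s(p, q) : Set V) ⊆ C := by
      intro x hx
      rcases Sym2.mem_iff.1 hx with rfl | rfl <;> assumption
    obtain rfl := honly d hd (hdpq.mono hsub)
    simpa [Touches] using hdpq
  have ha : a ∈ C := hC (by simp)
  have hb : b ∈ C := hC (by simp)
  have hc : c ∈ C := hC (by simp)
  exact Sym2.mem_triangle_of_meets_sides hab.ne hbc.ne hac.ne (hmeets hab ha hb)
    (hmeets hbc hb hc) (hmeets hac ha hc)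

end IsTotalCover

lemma coveredBy_insert {e : Sym2 V} {v : V} :
    CoveredBy (insert e M) v ↔ v ∈ e ∨ CoveredBy M v := by
  simp [CoveredBy]

lemma ncard_insert_of_not_coveredBy (hMfin : M.Finite) {e : Sym2 V} {v : V} (hve : v ∈ e)
    (hv : ¬ CoveredBy M v) : (insert e M).ncard = M.ncard + 1 :=
  Set.ncard_insert_of_notMem (fun he => hv ⟨e, he, hve⟩) hMfin

namespace IsMatchingSet

lemma eq_of_mem_of_mem (hM : IsMatchingSet G M) {e f : Sym2 V} (he : e ∈ M) (hf : f ∈ M) {v : V}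
    (hve : v ∈ e) (hvf : v ∈ f) : e = f := by
  by_contra hef
  exact hM.2 e he f hf hef v hve hvf

lemma mono {M' : Set (Sym2 V)} (hM : IsMatchingSet G M) (h : M' ⊆ M) : IsMatchingSet G M' :=
  ⟨h.trans hM.1, fun e he f hf => hM.2 e (h he) f (h hf)⟩

protected lemma insert (hM : IsMatchingSet G M) {e : Sym2 V} (he : e ∈ G.edgeSet)
    (hfree : ∀ v ∈ e, ¬ CoveredBy M v) : IsMatchingSet G (insert e M) := by
  refine ⟨Set.insert_subset he hM.1, ?_⟩
  rintro f (rfl | hf) g (rfl | hg) hfg v hvf hvg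
  · exact hfg rfl
  · exact hfree v hvf ⟨g, hg, hvg⟩
  · exact hfree v hvg ⟨f, hf, hvf⟩
  · exact hM.2 f hf g hg hfg v hvf hvg

lemma not_coveredBy_diff_singleton (hM : IsMatchingSet G M) {e : Sym2 V} (he : e ∈ M) {v : V}
    (hve : v ∈ e) : ¬ CoveredBy (M \ {e}) v :=
  fun ⟨_, ⟨hfM, hfe⟩, hvf⟩ => hfe (hM.eq_of_mem_of_mem hfM he hvf hve)

end IsMatchingSet

/-- An `M`-alternating path `a p q b` with `a`, `b` free and `pq ∈ M` would augment `M`. -/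
lemma IsMaximumMatching.eq_of_adj_of_adj [Finite V] (hM : IsMaximumMatching G M) {a b p q : V}
    (ha : ¬ CoveredBy M a) (hb : ¬ CoveredBy M b) (hap : G.Adj a p) (hbq : G.Adj b q)
    (hpq : s(p, q) ∈ M) : a = b := by
  by_contra hab
  have hp : CoveredBy M p := ⟨_, hpq, Sym2.mem_mk_left p q⟩
  have hq : CoveredBy M q := ⟨_, hpq, Sym2.mem_mk_right p q⟩
  set M₀ := M \ {s(p, q)}
  have hM₀ : IsMatchingSet G M₀ := hM.1.mono Set.sdiff_subset
  have hfree₀ : ∀ {v}, ¬ CoveredBy M v → ¬ CoveredBy M₀ v :=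
    fun hv ⟨f, hf, hvf⟩ => hv ⟨f, hf.1, hvf⟩
  have hq₀ := hM.1.not_coveredBy_diff_singleton hpq (Sym2.mem_mk_right p q)
  have hp₀ := hM.1.not_coveredBy_diff_singleton hpq (Sym2.mem_mk_left p q)
  have hM₁ : IsMatchingSet G (insert s(b, q) M₀) :=
    hM₀.insert hbq (Sym2.forall_mem_pair.2 ⟨hfree₀ hb, hq₀⟩)
  have ha₁ : ¬ CoveredBy (insert s(b, q) M₀) a := by
    simp only [coveredBy_insert, Sym2.mem_iff, not_or]
    exact ⟨⟨hab, fun h => ha (h ▸ hq)⟩, hfree₀ ha⟩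
  have hp₁ : ¬ CoveredBy (insert s(b, q) M₀) p := by
    simp only [coveredBy_insert, Sym2.mem_iff, not_or]
    exact ⟨⟨fun h => hb (h ▸ hp), (G.ne_of_adj ((G.mem_edgeSet).1 (hM.1.1 hpq)))⟩, hp₀⟩
  have hM₂ := hM₁.insert hap (Sym2.forall_mem_pair.2 ⟨ha₁, hp₁⟩)
  have hlarger := hM.2 _ hM₂
  rw [ncard_insert_of_not_coveredBy (Set.toFinite _) (Sym2.mem_mk_left a p) ha₁,
    ncard_insert_of_not_coveredBy (Set.toFinite _) (Sym2.mem_mk_left b q) (hfree₀ hb),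
    Set.ncard_sdiff_singleton_of_mem hpq] at hlarger
  have hpos : 0 < M.ncard := (Set.ncard_pos (Set.toFinite M)).2 ⟨_, hpq⟩
  omega

lemma exists_badEdge (G : SimpleGraph V) (M : Set (Sym2 V)) :
    ∃ ebad : V → Sym2 V, ∀ w, IsBad G M w → ebad w ∈ M ∧ ∀ x ∈ ebad w, G.Adj w x := by
  have : ∀ w, ∃ e : Sym2 V, IsBad G M w → e ∈ M ∧ ∀ x ∈ e, G.Adj w x := by
    intro w
    by_cases hw : IsBad G M w
    · obtain ⟨-, u, v, huv, hwu, hwv⟩ := hw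
      exact ⟨s(u, v), fun _ => ⟨huv, Sym2.forall_mem_pair.2 ⟨hwu, hwv⟩⟩⟩
    · exact ⟨s(w, w), fun h => absurd h hw⟩
  choose ebad hebad using this
  exact ⟨ebad, hebad⟩

def cluster (G : SimpleGraph V) (M : Set (Sym2 V)) (ebad : V → Sym2 V) (e : Sym2 V) : Set V :=
  (e : Set V) ∪ {w | IsBad G M w ∧ ebad w = e}

lemma IsMatchingSet.eq_of_mem_cluster (hM : IsMatchingSet G M) {ebad : V → Sym2 V}
    {e e' : Sym2 V} (he : e ∈ M) (he' : e' ∈ M) {x : V} (hx : x ∈ cluster G M ebad e)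
    (hx' : x ∈ cluster G M ebad e') : e = e' := by
  rcases hx with hx | ⟨hxbad, rfl⟩ <;> rcases hx' with hx' | ⟨hxbad', hxe'⟩
  · exact hM.eq_of_mem_of_mem he he' hx hx'
  · exact absurd ⟨_, he, hx⟩ hxbad'.1
  · exact absurd ⟨_, he', hx'⟩ hxbad.1
  · exact hxe'

lemma IsMaximumMatching.injOn_badEdge [Finite V] (hM : IsMaximumMatching G M)
    {ebad : V → Sym2 V} (hebad : ∀ w, IsBad G M w → ebad w ∈ M ∧ ∀ x ∈ ebad w, G.Adj w x) :
    Set.InjOn ebad {w | IsBad G M w} := by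
  intro w hw w' hw' hww'
  obtain ⟨p, q, hpq⟩ := Sym2.exists.1 ⟨ebad w, rfl⟩
  have hwp : G.Adj w p := (hebad w hw).2 p (hpq ▸ Sym2.mem_mk_left p q)
  have hw'q : G.Adj w' q := (hebad w' hw').2 q (hww' ▸ hpq ▸ Sym2.mem_mk_right p q)
  exact hM.eq_of_adj_of_adj hw.1 hw'.1 hwp hw'q (hpq ▸ (hebad w hw).1)

lemma triangle_subset_cluster {ebad : V → Sym2 V} {w p q : V} (hw : IsBad G M w)
    (hpq : ebad w = s(p, q)) :
    {w, p, q} ⊆ cluster G M ebad (ebad w) := by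
  rintro x (rfl | rfl | rfl)
  · exact Or.inr ⟨hw, rfl⟩
  · exact Or.inl (by simp [hpq])
  · exact Or.inl (by simp [hpq])

theorem IsTotalCover.ncard_add_ncard_isBad_le [Finite V] (hS : IsTotalCover G SV SE)
    (hM : IsMaximumMatching G M) :
    M.ncard + {w | IsBad G M w}.ncard ≤
      2 * ((SV \ {v | _root_.IsIsolated G v}).ncard + SE.ncard) := by
  obtain ⟨ebad, hebad⟩ := exists_badEdge G M
  rw [← (hM.injOn_badEdge hebad).ncard_image]
  refine ncard_add_ncard_le_of_cores (cluster G M ebad) M (ebad '' {w | IsBad G M w}) _ _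
    (Set.image_subset_iff.2 fun w hw => (hebad w hw).1)
    (fun e he e' he' x hx hx' => hM.1.eq_of_mem_cluster he he' hx hx')
    (fun e he => (hS.exists_touches_of_mem_edgeSet (hM.1.1 he)).imp
      fun d hd => ⟨hd.1, hd.2.mono Set.subset_union_left⟩) ?_
  rintro _ ⟨w, hw, rfl⟩ f honly x hxf
  obtain ⟨p, q, hpq⟩ := Sym2.exists.1 ⟨ebad w, rfl⟩
  have hwp : G.Adj w p := (hebad w hw).2 p (hpq ▸ Sym2.mem_mk_left p q)
  have hwq : G.Adj w q := (hebad w hw).2 q (hpq ▸ Sym2.mem_mk_right p q)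
  have hpq' : G.Adj p q := hM.1.1 (hpq ▸ (hebad w hw).1)
  have htri := triangle_subset_cluster hw hpq
  exact htri (by simpa using hS.mem_triangle_of_touches_eq hwp hpq' hwq htri honly x hxf)

end

/-- with `M` a maximum matching of size `m`, `t` the number of isolated
vertices and `k` the number of bad vertices, every total cover has size at least
`(m + k)/2 + t`. -/
theorem stmt_0 {V : Type*} [Fintype V] (G : SimpleGraph V)
    (M : Set (Sym2 V)) (hM : IsMaximumMatching G M)
    (m t k : ℕ)
    (hm : M.ncard = m)
    (ht : {v : V | _root_.IsIsolated G v}.ncard = t)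
    (hk : {w : V | IsBad G M w}.ncard = k)
    (SV : Set V) (SE : Set (Sym2 V)) (hS : IsTotalCover G SV SE) :
    ((m : ℝ) + k) / 2 + t ≤ SV.ncard + SE.ncard := by
  have hiso : {v | _root_.IsIsolated G v} ⊆ SV := fun v hv => hS.mem_of_isIsolated hv
  have hbound := hS.ncard_add_ncard_isBad_le hM
  rw [Set.ncard_sdiff hiso, hm, hk, ht] at hbound
  have ht_le : t ≤ SV.ncard := ht ▸ Set.ncard_le_ncard hiso
  have hnat : m + k + 2 * t ≤ 2 * (SV.ncard + SE.ncard) := by omega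
  have hreal : (m : ℝ) + k + 2 * t ≤ 2 * (SV.ncard + SE.ncard) := by exact_mod_cast hnat
  linarith
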